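/- arXiv:1906.06785 — 2 statements merged into one kernel-verified Lean document; each statement's English description precedes it below -/
import Mathlib

section
/- Let F be an invertible n×n real matrix, B an m×n real matrix, and suppose S = B F⁻¹ Bᵀ is invertible. With A = fromBlocks F Bᵀ B 0 and P = fromBlocks F Bᵀ 0 (−S), the characteristic polynomial of the preconditioned matrix A · P⁻¹ equals (X − 1)^(n+m); in particular every eigenvalue of A · P⁻¹ equals 1. -/
/-! Inverting the block upper triangular preconditioner explicitly shows that
`A * P⁻¹ = fromBlocks 1 0 (B * F⁻¹) 1`, a block lower unitriangular matrix, whose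
characteristic polynomial is the product of those of its identity diagonal blocks. -/

open Matrix Polynomial

namespace Matrix

variable {m n R : Type*} [Fintype m] [Fintype n] [DecidableEq m] [DecidableEq n] [CommRing R]

theorem fromBlocks_mul_inv_fromBlocks_schur (F : Matrix n n R) (C : Matrix n m R)
    (B : Matrix m n R) (hF : IsUnit F) (hS : IsUnit (B * F⁻¹ * C)) :
    fromBlocks F C B 0 * (fromBlocks F C 0 (-(B * F⁻¹ * C)))⁻¹ = fromBlocks 1 0 (B * F⁻¹) 1 := by
  have hFF : F * F⁻¹ = 1 := mul_nonsing_inv F ((isUnit_iff_isUnit_det F).mp hF)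
  have hSS : -(B * F⁻¹ * C) * (-(B * F⁻¹ * C))⁻¹ = 1 :=
    mul_nonsing_inv _ ((isUnit_iff_isUnit_det _).mp hS.neg)
  rw [inv_fromBlocks_zero₂₁_of_isUnit_iff _ _ _ (by simp [hF, hS]), fromBlocks_multiply]
  simp only [hFF, Matrix.mul_zero, add_zero, Matrix.mul_neg, ← Matrix.mul_assoc, Matrix.one_mul,
    neg_add_cancel, zero_mul, fromBlocks_inj, true_and]
  rw [← Matrix.neg_mul, hSS]

theorem charpoly_fromBlocks_one_zero_one (L : Matrix m n R) :
    (fromBlocks 1 0 L 1).charpoly = (X - 1) ^ (Fintype.card n + Fintype.card m) := by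
  rw [charpoly_fromBlocks_zero₁₂, charpoly_one, charpoly_one, pow_add]

end Matrix

theorem Polynomial.eq_of_isRoot_X_sub_C_pow {R : Type*} [CommRing R] [IsDomain R] {a μ : R}
    {k : ℕ} (h : ((X - C a) ^ k).IsRoot μ) : μ = a := by
  simp only [IsRoot, eval_pow, eval_sub, eval_X, eval_C] at h
  exact sub_eq_zero.mp (pow_eq_zero_iff'.mp h).1

/-- With `A = fromBlocks F Bᵀ B 0` and `P = fromBlocks F Bᵀ 0 (-S)` where
`S = B F⁻¹ Bᵀ`, the characteristic polynomial of `A * P⁻¹` is `(X - 1)^(n + m)`;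
in particular every eigenvalue of `A * P⁻¹` equals `1`. -/
theorem charpoly_preconditioned_saddle_point
    {n m : ℕ} (F : Matrix (Fin n) (Fin n) ℝ) (B : Matrix (Fin m) (Fin n) ℝ)
    (hF : IsUnit F) (hS : IsUnit (B * F⁻¹ * Bᵀ)) :
    ((Matrix.fromBlocks F Bᵀ B 0) *
        (Matrix.fromBlocks F Bᵀ 0 (-(B * F⁻¹ * Bᵀ)))⁻¹).charpoly =
      (Polynomial.X - Polynomial.C 1) ^ (n + m) ∧
    ∀ μ : ℝ,
      ((Matrix.fromBlocks F Bᵀ B 0) *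
          (Matrix.fromBlocks F Bᵀ 0 (-(B * F⁻¹ * Bᵀ)))⁻¹).charpoly.IsRoot μ → μ = 1 := by
  have hcharpoly : ((fromBlocks F Bᵀ B 0) * (fromBlocks F Bᵀ 0 (-(B * F⁻¹ * Bᵀ)))⁻¹).charpoly =
      (X - C 1) ^ (n + m) := by
    rw [fromBlocks_mul_inv_fromBlocks_schur F Bᵀ B hF hS, charpoly_fromBlocks_one_zero_one,
      Fintype.card_fin, Fintype.card_fin, map_one]
  exact ⟨hcharpoly, fun μ hμ => eq_of_isRoot_X_sub_C_pow (hcharpoly ▸ hμ)⟩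
end

section
/- Let N : ℝ^{n_u} → ℝ^{q×q} be a linear map (assigning to each velocity coefficient vector its discrete convection matrix), let H₁,…,H_{n_ξ} be n_ξ×n_ξ real matrices, and let u be the n_t×n_ξ×n_u tensor given in tensor train format by u(k,l,j) = ∑_{α₁,α₂} u⁽¹⁾(k,α₁)·u⁽²⁾(α₁,l,α₂)·u⁽³⁾(α₂,j). For each k and l let u^k_l ∈ ℝ^{n_u} denote the vector with entries u(k,l,j). Then the block-diagonal matrix whose k-th diagonal block is ∑_{l=1}^{n_ξ} H_l ⊗ N(u^k_l) equals ∑_{α₁,α₂} diag(u⁽¹⁾_{α₁}) ⊗ (∑_{l=1}^{n_ξ} u⁽²⁾(α₁,l,α₂)·H_l) ⊗ N(u⁽³⁾_{α₂}), where u⁽¹⁾_{α₁} ∈ ℝ^{n_t} is the α₁-th column of u⁽¹⁾, u⁽³⁾_{α₂} ∈ ℝ^{n_u} is the vector with entries u⁽³⁾(α₂,j), and diag(v) is the diagonal matrix with v on the diagonal. -/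
/-!
The tensor-train format makes each fibre `u^k_l` the combination
`∑ u⁽¹⁾(k,α₁) u⁽²⁾(α₁,l,α₂) u⁽³⁾_{α₂}`. Linearity of `N` and bilinearity of `⊗ₖ` turn the `k`-th
block into `∑_{α₁,α₂} u⁽¹⁾(k,α₁) • ((∑_l u⁽²⁾(α₁,l,α₂) H_l) ⊗ₖ N(u⁽³⁾_{α₂}))`, and a
block-diagonal matrix with blocks `c_k • B` is `diag(c) ⊗ₖ B`.
-/

open Matrix Kronecker

/-- Block-diagonal matrix built from a family of square blocks indexed by `Fin nt`,
with block index first (matching the Kronecker-product ordering `I_{n_t} ⊗ ⋯`). -/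
def blockDiag {nt : ℕ} {ι : Type*} (A : Fin nt → Matrix ι ι ℝ) :
    Matrix (Fin nt × ι) (Fin nt × ι) ℝ :=
  Matrix.of fun x y => if x.1 = y.1 then A x.1 x.2 y.2 else 0

namespace Matrix

variable {R ι l m n p : Type*} [NonUnitalNonAssocSemiring R]

theorem sum_kronecker (s : Finset ι) (A : ι → Matrix l m R) (B : Matrix n p R) :
    (∑ i ∈ s, A i) ⊗ₖ B = ∑ i ∈ s, A i ⊗ₖ B := by
  ext
  simp [Matrix.sum_apply, Finset.sum_mul]

theorem kronecker_sum (s : Finset ι) (A : Matrix l m R) (B : ι → Matrix n p R) :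
    A ⊗ₖ (∑ i ∈ s, B i) = ∑ i ∈ s, A ⊗ₖ B i := by
  ext
  simp [Matrix.sum_apply, Finset.mul_sum]

end Matrix

theorem sum_kronecker_map_sum_sum_mul_smul {R V ι κ₁ κ₂ m n : Type*} [CommSemiring R]
    [AddCommMonoid V] [Module R V] [Fintype ι] [Fintype κ₁] [Fintype κ₂]
    (N : V →ₗ[R] Matrix n n R) (H : ι → Matrix m m R) (a : κ₁ → R) (b : κ₁ → ι → κ₂ → R)
    (w : κ₂ → V) :
    ∑ l, H l ⊗ₖ N (∑ α₁, ∑ α₂, (a α₁ * b α₁ l α₂) • w α₂) =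
      ∑ α₁, ∑ α₂, a α₁ • ((∑ l, b α₁ l α₂ • H l) ⊗ₖ N (w α₂)) := by
  simp only [map_sum, LinearMap.map_smul, kronecker_sum, sum_kronecker, kronecker_smul,
    smul_kronecker, Finset.smul_sum, smul_smul]
  rw [Finset.sum_comm]
  exact Finset.sum_congr rfl fun _ _ => Finset.sum_comm

section BlockDiag

variable {nt : ℕ} {ι : Type*}

theorem blockDiag_eq_reindex_blockDiagonal [DecidableEq ι] (A : Fin nt → Matrix ι ι ℝ) :
    blockDiag A = reindex (Equiv.prodComm _ _) (Equiv.prodComm _ _) (blockDiagonal A) := by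
  ext ⟨k, i⟩ ⟨k', j⟩
  simp [_root_.blockDiag, blockDiagonal_apply]

theorem diagonal_kronecker_eq_blockDiag (c : Fin nt → ℝ) (B : Matrix ι ι ℝ) :
    diagonal c ⊗ₖ B = blockDiag fun k => c k • B := by
  classical
  rw [diagonal_kronecker, blockDiag_eq_reindex_blockDiagonal]

theorem blockDiag_sum {α : Type*} (s : Finset α) (A : α → Fin nt → Matrix ι ι ℝ) :
    blockDiag (fun k => ∑ a ∈ s, A a k) = ∑ a ∈ s, blockDiag (A a) := by
  ext x y
  simp only [_root_.blockDiag, of_apply, Matrix.sum_apply]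
  split_ifs <;> simp

end BlockDiag

/-- For a linear convection-matrix map `N`, stochastic matrices `H_l`, and
a velocity tensor `u` in tensor train format, the block-diagonal all-at-once convection
matrix with `k`-th block `∑_l H_l ⊗ N(u^k_l)` equals the sum of Kronecker products
`∑_{α₁,α₂} diag(u⁽¹⁾_{α₁}) ⊗ (∑_l u⁽²⁾(α₁,l,α₂) H_l) ⊗ N(u⁽³⁾_{α₂})`. -/
theorem convection_matrix_tensor_train
    {nt nξ nu q κ₁ κ₂ : ℕ}
    (N : (Fin nu → ℝ) →ₗ[ℝ] Matrix (Fin q) (Fin q) ℝ)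
    (H : Fin nξ → Matrix (Fin nξ) (Fin nξ) ℝ)
    (u₁ : Fin nt → Fin κ₁ → ℝ) (u₂ : Fin κ₁ → Fin nξ → Fin κ₂ → ℝ)
    (u₃ : Fin κ₂ → Fin nu → ℝ)
    (u : Fin nt → Fin nξ → Fin nu → ℝ)
    (hu : ∀ k l j, u k l j = ∑ α₁ : Fin κ₁, ∑ α₂ : Fin κ₂,
      u₁ k α₁ * u₂ α₁ l α₂ * u₃ α₂ j) :
    blockDiag (fun k => ∑ l : Fin nξ, (H l) ⊗ₖ N (fun j => u k l j)) =
      ∑ α₁ : Fin κ₁, ∑ α₂ : Fin κ₂,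
        (Matrix.diagonal (fun k => u₁ k α₁)) ⊗ₖ
          ((∑ l : Fin nξ, u₂ α₁ l α₂ • H l) ⊗ₖ N (fun j => u₃ α₂ j)) := by
  have fibre : ∀ k l, (fun j => u k l j) = ∑ α₁, ∑ α₂, (u₁ k α₁ * u₂ α₁ l α₂) • u₃ α₂ := by
    intro k l
    funext j
    simp [hu, Finset.sum_apply]
  simp_rw [fibre, sum_kronecker_map_sum_sum_mul_smul, blockDiag_sum,
    diagonal_kronecker_eq_blockDiag]
end
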